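/- Let (L,E,R,∂₂,∂₁,{,}) be a 2-crossed module of commutative algebras. Then the formula (r,e)▶•(e',l) = (ee' + r▶e', ∂₁(e)▶l + r▶l − {e'⊗e}) defines an algebra action of the semidirect product R⋉E on the semidirect product E⋉L (where E acts on L via e▶'l = {e⊗∂₂(l)}). -/

import Mathlib

/-!
Bilinearity is immediate, and on the `E`-component both multiplicativity conditions only
say that `(r,e) ▶ e' = ee' + r▶e'` is an action of `R ⋉ E` on `E`. On the `L`-component
they reduce, after expanding with 2XM6 and the action axioms, to two consequences of the
Peiffer lifting axioms: `{e'' ⊗ ∂₂{e' ⊗ e}} = {e'e'' ⊗ e}` (2XM1, 2XM3, 2XM6) and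
`{e' ⊗ e} l = {ee' ⊗ ∂₂ l} - ∂₁(e) ▶ {e' ⊗ ∂₂ l}` (2XM1, 2XM2, 2XM6).
-/

/-- An action of a commutative `k`-algebra `R` on a commutative `k`-algebra `M`:
a `k`-bilinear map satisfying `r▶(mm') = (r▶m)m' = m(r▶m')` and `(rr')▶m = r▶(r'▶m)`. -/
structure AlgAction (k R M : Type*) [CommRing k] [CommRing R] [CommRing M]
    [Algebra k R] [Algebra k M] where
  act : R →ₗ[k] M →ₗ[k] M
  a1 : ∀ (r : R) (m m' : M), act r (m * m') = act r m * m'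
  a1' : ∀ (r : R) (m m' : M), act r (m * m') = m * act r m'
  a2 : ∀ (r r' : R) (m : M), act (r * r') m = act r (act r' m)

/-- A 2-crossed module of commutative `k`-algebras, with Peiffer lifting `lift e e' = {e ⊗ e'}`.
The action `e ▶' l` of `E` on `L` is `lift e (d2 l)` (axiom 2XM5 is definitional). -/
structure TwoCrossedModule (k L E R : Type*) [CommRing k] [CommRing L] [CommRing E] [CommRing R]
    [Algebra k L] [Algebra k E] [Algebra k R] where
  actE : AlgAction k R E
  actL : AlgAction k R L
  d2 : L →ₗ[k] E
  d1 : E →ₗ[k] R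
  d2_mul : ∀ l l' : L, d2 (l * l') = d2 l * d2 l'
  d1_mul : ∀ e e' : E, d1 (e * e') = d1 e * d1 e'
  comp : ∀ l : L, d1 (d2 l) = 0
  d1_act : ∀ (r : R) (e : E), d1 (actE.act r e) = r * d1 e
  d2_act : ∀ (r : R) (l : L), d2 (actL.act r l) = actE.act r (d2 l)
  lift : E →ₗ[k] E →ₗ[k] L
  axm1 : ∀ e e' : E, d2 (lift e e') = e * e' - actE.act (d1 e') e
  axm2 : ∀ l l' : L, lift (d2 l) (d2 l') = l * l'
  axm3 : ∀ e e' e'' : E, lift e (e' * e'') = lift (e * e') e'' + actL.act (d1 e'') (lift e e')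
  axm4 : ∀ (l : L) (e : E), lift (d2 l) e = lift e (d2 l) - actL.act (d1 e) l
  axm6a : ∀ (r : R) (e e' : E), actL.act r (lift e e') = lift (actE.act r e) e'
  axm6b : ∀ (r : R) (e e' : E), actL.act r (lift e e') = lift e (actE.act r e')

def semidirectMul {k R M : Type*} [CommSemiring k] [Semiring R] [Semiring M] [Module k R]
    [Module k M] (act : R →ₗ[k] M →ₗ[k] M) (p q : R × M) : R × M :=
  (p.1 * q.1, act p.1 q.2 + act q.1 p.2 + p.2 * q.2)

namespace AlgAction

variable {k R M : Type*} [CommRing k] [CommRing R] [CommRing M] [Algebra k R] [Algebra k M]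
  (A : AlgAction k R M)

def semidirectAct (p : R × M) (m : M) : M :=
  p.2 * m + A.act p.1 m

theorem semidirectAct_mul (p : R × M) (m m' : M) :
    A.semidirectAct p (m * m') = A.semidirectAct p m * m' := by
  simp only [semidirectAct]
  linear_combination A.a1 p.1 m m'

theorem semidirectAct_semidirectMul (p p' : R × M) (m : M) :
    A.semidirectAct (semidirectMul A.act p p') m = A.semidirectAct p (A.semidirectAct p' m) := by
  simp only [semidirectAct, semidirectMul, map_add]
  linear_combination A.a2 p.1 p'.1 m - A.a1 p.1 p'.2 m - A.a1 p'.1 p.2 m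
    + A.a1' p'.1 p.2 m

theorem act_act_comm (r s : R) (m : M) : A.act r (A.act s m) = A.act s (A.act r m) := by
  rw [← A.a2, mul_comm, A.a2]

end AlgAction

namespace TwoCrossedModule

variable {k L E R : Type*} [CommRing k] [CommRing L] [CommRing E] [CommRing R]
  [Algebra k L] [Algebra k E] [Algebra k R] (T : TwoCrossedModule k L E R)

def peifferAct : E →ₗ[k] L →ₗ[k] L :=
  T.lift.compl₂ T.d2

@[simp]
theorem peifferAct_apply (e : E) (l : L) : T.peifferAct e l = T.lift e (T.d2 l) :=
  rfl

theorem lift_act_right (r : R) (e e' : E) :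
    T.lift e (T.actE.act r e') = T.lift (T.actE.act r e) e' := by
  rw [← T.axm6b, T.axm6a]

theorem act_lift_d2 (r : R) (e : E) (l : L) :
    T.actL.act r (T.lift e (T.d2 l)) = T.lift e (T.d2 (T.actL.act r l)) := by
  rw [T.axm6b, T.d2_act]

theorem actL_d1_actE (r : R) (e : E) (l : L) :
    T.actL.act (T.d1 (T.actE.act r e)) l = T.actL.act r (T.actL.act (T.d1 e) l) := by
  rw [T.d1_act, T.actL.a2]

theorem actL_d1_mul (e e' : E) (l : L) :
    T.actL.act (T.d1 (e * e')) l = T.actL.act (T.d1 e) (T.actL.act (T.d1 e') l) := by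
  rw [T.d1_mul, T.actL.a2]

theorem lift_mul_right_comm (e e' e'' : E) :
    T.lift e'' (e * e') = T.lift (e' * e'') e + T.actL.act (T.d1 e) (T.lift e'' e') := by
  rw [mul_comm e e', T.axm3, mul_comm e'' e']

theorem lift_d2_lift (e e' e'' : E) :
    T.lift e'' (T.d2 (T.lift e' e)) = T.lift (e' * e'') e := by
  rw [T.axm1, map_sub, T.axm3, ← T.axm6b, mul_comm e'' e', add_sub_cancel_right]

theorem lift_mul (e e' : E) (l : L) :
    T.lift e' e * l = T.lift (e * e') (T.d2 l) - T.actL.act (T.d1 e) (T.lift e' (T.d2 l)) := by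
  rw [← T.axm2, T.axm1, map_sub, LinearMap.sub_apply, ← T.axm6a, mul_comm e' e]

def semidirectAct : R × E →ₗ[k] E × L →ₗ[k] E × L :=
  LinearMap.mk₂ k (fun p q => (T.actE.semidirectAct p q.1,
      T.actL.act (T.d1 p.2) q.2 + T.actL.act p.1 q.2 - T.lift q.1 p.2))
    (fun p p' q => by
      ext <;> simp only [AlgAction.semidirectAct, Prod.fst_add, Prod.snd_add, map_add,
        LinearMap.add_apply] <;> ring)
    (fun c p q => by
      ext <;> simp only [AlgAction.semidirectAct, Prod.smul_fst, Prod.smul_snd, map_smul,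
        LinearMap.smul_apply, smul_mul_assoc, smul_add, smul_sub])
    (fun p q q' => by
      ext <;> simp only [AlgAction.semidirectAct, Prod.fst_add, Prod.snd_add, map_add,
        LinearMap.add_apply] <;> ring)
    (fun c p q => by
      ext <;> simp only [AlgAction.semidirectAct, Prod.smul_fst, Prod.smul_snd, map_smul,
        LinearMap.smul_apply, mul_smul_comm, smul_add, smul_sub])

theorem semidirectAct_semidirectMul_right (p : R × E) (q q' : E × L) :
    T.semidirectAct p (semidirectMul T.peifferAct q q') =
      semidirectMul T.peifferAct (T.semidirectAct p q) q' := by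
  obtain ⟨r, e⟩ := p
  obtain ⟨e', l⟩ := q
  obtain ⟨e'', l'⟩ := q'
  refine Prod.ext (T.actE.semidirectAct_mul _ _ _) ?_
  simp only [semidirectAct, semidirectMul, AlgAction.semidirectAct, LinearMap.mk₂_apply,
    peifferAct_apply, map_add, map_sub, LinearMap.add_apply]
  linear_combination T.act_lift_d2 (T.d1 e) e'' l
    + T.actL.a1 (T.d1 e) l l' + T.axm6a r e' (T.d2 l') + T.act_lift_d2 r e'' l
    + T.actL.a1 r l l' + T.lift_d2_lift e e' e'' + T.lift_mul e e' l'

theorem semidirectAct_semidirectMul_left (p p' : R × E) (q : E × L) :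
    T.semidirectAct (semidirectMul T.actE.act p p') q =
      T.semidirectAct p (T.semidirectAct p' q) := by
  obtain ⟨r, e⟩ := p
  obtain ⟨r', e'⟩ := p'
  obtain ⟨e'', l⟩ := q
  refine Prod.ext (T.actE.semidirectAct_semidirectMul _ _ _) ?_
  simp only [semidirectAct, semidirectMul, AlgAction.semidirectAct, LinearMap.mk₂_apply,
    map_add, map_sub, LinearMap.add_apply]
  linear_combination T.actL_d1_actE r e' l + T.actL_d1_actE r' e l + T.actL_d1_mul e e' l
    + T.actL.a2 r r' l + T.axm6b r e'' e' - T.lift_act_right r' e'' e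
    - T.lift_mul_right_comm e e' e'' + T.actL.act_act_comm r' (T.d1 e) l

end TwoCrossedModule

theorem stmt4 (k L E R : Type*) [CommRing k] [CommRing L] [CommRing E] [CommRing R]
    [Algebra k L] [Algebra k E] [Algebra k R] (T : TwoCrossedModule k L E R) :
    ∀ (m1 : R × E → R × E → R × E) (m2 : E × L → E × L → E × L)
      (bact : R × E → E × L → E × L),
      (m1 = fun p q => (p.1 * q.1, T.actE.act p.1 q.2 + T.actE.act q.1 p.2 + p.2 * q.2)) →
      (m2 = fun p q => (p.1 * q.1,
        T.lift p.1 (T.d2 q.2) + T.lift q.1 (T.d2 p.2) + p.2 * q.2)) →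
      (bact = fun p q => (p.2 * q.1 + T.actE.act p.1 q.1,
        T.actL.act (T.d1 p.2) q.2 + T.actL.act p.1 q.2 - T.lift q.1 p.2)) →
      (∀ p p' q, bact (p + p') q = bact p q + bact p' q) ∧
      (∀ p q q', bact p (q + q') = bact p q + bact p q') ∧
      (∀ (c : k) p q, bact (c • p) q = c • bact p q) ∧
      (∀ (c : k) p q, bact p (c • q) = c • bact p q) ∧
      (∀ p q q', bact p (m2 q q') = m2 (bact p q) q') ∧
      (∀ p p' q, bact (m1 p p') q = bact p (bact p' q)) := by
  rintro m1 m2 bact rfl rfl rfl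
  exact ⟨T.semidirectAct.map_add₂, fun p => map_add (T.semidirectAct p),
    T.semidirectAct.map_smul₂, fun c p => map_smul (T.semidirectAct p) c,
    T.semidirectAct_semidirectMul_right, T.semidirectAct_semidirectMul_left⟩
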